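/- Let κ be a primitive from 𝒜 × ℬ to 𝒰 × 𝒱 that fails the completeness condition. Let A, B, Z be finite-valued random variables on a probability space with I[A;B|Z] = 0, and let (U,V) be generated by one use of κ with inputs (A,B) and side information Z. Then the pair (⟨Z,A,U⟩, ⟨Z,B,V⟩) is trivial. -/

import Mathlib

open MeasureTheory Real
open scoped ENNReal

namespace SecureComputation

variable {Ω : Type*} [MeasurableSpace Ω]

/-- The pair random variable `⟨X,Y⟩`. -/
def pair {𝒳 𝒴 : Type*} (X : Ω → 𝒳) (Y : Ω → 𝒴) : Ω → 𝒳 × 𝒴 := fun ω => (X ω, Y ω)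

/-- Shannon entropy `H[X]` of a finite-valued random variable. -/
noncomputable def ent {𝒳 : Type*} (μ : Measure Ω) (X : Ω → 𝒳) : ℝ :=
  ∑' x : 𝒳, negMulLog ((μ (X ⁻¹' {x})).toReal)

/-- Mutual information `I[X;Y]`. -/
noncomputable def mi {𝒳 𝒴 : Type*} (μ : Measure Ω) (X : Ω → 𝒳) (Y : Ω → 𝒴) : ℝ :=
  ent μ X + ent μ Y - ent μ (pair X Y)

/-- Conditional mutual information `I[X;Y|Z]`. -/
noncomputable def cmi {𝒳 𝒴 𝒵 : Type*} (μ : Measure Ω) (X : Ω → 𝒳) (Y : Ω → 𝒴)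
    (Z : Ω → 𝒵) : ℝ :=
  ent μ (pair X Z) + ent μ (pair Y Z) - ent μ (pair (pair X Y) Z) - ent μ Z

/-- Conditional entropy `H[X|Y]`. -/
noncomputable def condEnt {𝒳 𝒴 : Type*} (μ : Measure Ω) (X : Ω → 𝒳) (Y : Ω → 𝒴) : ℝ :=
  ent μ (pair X Y) - ent μ Y

/-- A finite-valued random variable: preimages of points are measurable. -/
def DiscreteRV {𝒳 : Type*} (X : Ω → 𝒳) : Prop := ∀ x, MeasurableSet (X ⁻¹' {x})

/-- The pair `(X,Y)` is trivial: some finite-valued `Z` on the same space has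
`I[X;Y|Z] = 0`, `I[Z;X|Y] = 0`, `I[Z;Y|X] = 0`. -/
def IsTrivialPair {𝒳 𝒴 : Type*} (μ : Measure Ω) (X : Ω → 𝒳) (Y : Ω → 𝒴) : Prop :=
  ∃ (𝒵 : Type) (_ : Fintype 𝒵) (Z : Ω → 𝒵), DiscreteRV Z ∧
    cmi μ X Y Z = 0 ∧ cmi μ Z X Y = 0 ∧ cmi μ Z Y X = 0

/-- `(U,V)` is generated by one use of the primitive `κ` with inputs `(A,B)` and
side information `T`. -/
def GeneratedBy {𝒜 ℬ 𝒰 𝒱 𝒯 : Type*} (μ : Measure Ω) (κ : 𝒜 × ℬ → PMF (𝒰 × 𝒱))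
    (A : Ω → 𝒜) (B : Ω → ℬ) (U : Ω → 𝒰) (V : Ω → 𝒱) (T : Ω → 𝒯) : Prop :=
  ∀ (t : 𝒯) (a : 𝒜) (b : ℬ) (u : 𝒰) (v : 𝒱),
    μ {ω | T ω = t ∧ A ω = a ∧ B ω = b ∧ U ω = u ∧ V ω = v} =
      μ {ω | T ω = t ∧ A ω = a ∧ B ω = b} * κ (a, b) (u, v)

/-- The primitive `κ` fails the completeness condition: whenever its inputs are
independent and uniformly distributed and `(U,V)` is generated by one use of `κ`
(with constant side information), the pair `(⟨A,U⟩, ⟨B,V⟩)` is trivial. -/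
def FailsCompleteness {𝒜 ℬ 𝒰 𝒱 : Type} (κ : 𝒜 × ℬ → PMF (𝒰 × 𝒱)) : Prop :=
  ∀ (Ω' : Type) (_ : MeasurableSpace Ω') (μ : Measure Ω'), IsProbabilityMeasure μ →
    ∀ (A : Ω' → 𝒜) (B : Ω' → ℬ) (U : Ω' → 𝒰) (V : Ω' → 𝒱),
      DiscreteRV A → DiscreteRV B → DiscreteRV U → DiscreteRV V →
      (∀ (a : 𝒜) (b : ℬ), μ {ω | A ω = a ∧ B ω = b} =
        ((Nat.card 𝒜 : ℝ≥0∞) * (Nat.card ℬ : ℝ≥0∞))⁻¹) →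
      GeneratedBy μ κ A B U V (fun _ => ()) →
      IsTrivialPair μ (pair A U) (pair B V)

/-!
Conditional mutual information vanishes exactly when `P(a,b,c) P(c) = P(a,c) P(b,c)`: for each
`c` the slice's mutual information is the divergence `∑ (r s / M) klFun (m M / (r s))` of the
slice `m` from the product of its marginals `r`, `s`, and `klFun` vanishes only at `1`.

Call a function `p` on `α × β` a block product if there are maps `c : α → S`, `d : β → S` such
that `p` vanishes off `{c a = d b}` and is of the form `f a * g b` on it. A pair whose joint law is
a block product is trivial, witnessed by its common part `c ∘ X = d ∘ Y`: given that part the two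
sides are independent because the law is a product on each block.

Conversely, feed independent uniform inputs to `κ` on the space `(𝒜 × 𝒰) × (ℬ × 𝒱)`, where the
two sides determine the outcome. A witness `T` of triviality of `(⟨A,U⟩, ⟨B,V⟩)` is then almost
surely a function of each side (`I[T;⟨B,V⟩|⟨A,U⟩] = 0` leaves `T` no room to vary within a
fibre), so the law `κ (a,b) (u,v)` is a block product. Under side information, `I[A;B|Z] = 0`
and one use of `κ` make the conditional law of `((A,U),(B,V))` given `Z = z` equal to
`P(A = a | z) * P(B = b | z) * κ (a,b) (u,v)`, a reweighting of that block product by a function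
of each side, so the law of `(⟨Z,A,U⟩, ⟨Z,B,V⟩)` is again a block product, with common part
`(Z, c (A,U))`.
-/

open scoped Classical
open Function InformationTheory

section MassMutualInfo

variable {α β : Type*} [Fintype α] [Fintype β]

noncomputable def massMutualInfo (m : α → β → ℝ) : ℝ :=
  ∑ a, negMulLog (∑ b, m a b) + ∑ b, negMulLog (∑ a, m a b)
    - ∑ a, ∑ b, negMulLog (m a b) - negMulLog (∑ a, ∑ b, m a b)

lemma div_mul_klFun_mul_div {m r s M : ℝ} (hm : 0 ≤ m) (hmr : m ≤ r) (hms : m ≤ s)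
    (hrM : r ≤ M) :
    r * s / M * klFun (m * M / (r * s))
      = r * s / M - m + m * (log m + log M - log r - log s) := by
  rcases hm.eq_or_lt with rfl | hm
  · simp [klFun_zero]
  have hr : 0 < r := hm.trans_le hmr
  have hs : 0 < s := hm.trans_le hms
  have hM : 0 < M := hr.trans_le hrM
  rw [klFun_apply, log_div (by positivity) (by positivity), log_mul hm.ne' hM.ne',
    log_mul hr.ne' hs.ne']
  field_simp
  ring

lemma div_mul_klFun_mul_div_eq_zero_iff {m r s M : ℝ} (hm : 0 ≤ m) (hmr : m ≤ r)
    (hms : m ≤ s) (hrM : r ≤ M) :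
    r * s / M * klFun (m * M / (r * s)) = 0 ↔ m * M = r * s := by
  have hr : 0 ≤ r := hm.trans hmr
  have hs : 0 ≤ s := hm.trans hms
  rcases (mul_nonneg hr hs).eq_or_lt with hrs | hrs
  · have hm0 : m = 0 := by
      rcases mul_eq_zero.1 hrs.symm with h | h
      · exact le_antisymm (h ▸ hmr) hm
      · exact le_antisymm (h ▸ hms) hm
    simp [← hrs, hm0]
  have hr : 0 < r := lt_of_le_of_ne hr (by rintro rfl; simp at hrs)
  have hM : 0 < M := hr.trans_le hrM
  have hm' : 0 ≤ m * M / (r * s) := by positivity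
  rw [mul_eq_zero, klFun_eq_zero_iff hm', div_eq_one_iff_eq hrs.ne']
  simp [hrs.ne', hM.ne']

lemma div_mul_klFun_mul_div_nonneg {m r s M : ℝ} (hm : 0 ≤ m) (hmr : m ≤ r) (hms : m ≤ s)
    (hrM : r ≤ M) : 0 ≤ r * s / M * klFun (m * M / (r * s)) := by
  have hr : 0 ≤ r := hm.trans hmr
  have hM : 0 ≤ M := hr.trans hrM
  have hs : 0 ≤ s := hm.trans hms
  exact mul_nonneg (by positivity) (klFun_nonneg (by positivity))

lemma le_marginals (m : α → β → ℝ) (hm : ∀ a b, 0 ≤ m a b) (a : α) (b : β) :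
    m a b ≤ ∑ b', m a b' ∧ m a b ≤ ∑ a', m a' b ∧ ∑ b', m a b' ≤ ∑ a', ∑ b', m a' b' :=
  ⟨Finset.single_le_sum (fun b _ => hm a b) (Finset.mem_univ b),
    Finset.single_le_sum (fun a _ => hm a b) (Finset.mem_univ a),
    Finset.single_le_sum (fun a _ => Finset.sum_nonneg fun b _ => hm a b) (Finset.mem_univ a)⟩

lemma massMutualInfo_eq_sum_klFun (m : α → β → ℝ) (hm : ∀ a b, 0 ≤ m a b) :
    massMutualInfo m = ∑ a, ∑ b, (∑ b', m a b') * (∑ a', m a' b) / (∑ a', ∑ b', m a' b')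
      * klFun (m a b * (∑ a', ∑ b', m a' b') / ((∑ b', m a b') * (∑ a', m a' b))) := by
  have h := le_marginals m hm
  conv_rhs =>
    enter [2, a, 2, b]
    rw [div_mul_klFun_mul_div (hm a b) (h a b).1 (h a b).2.1 (h a b).2.2]
  obtain ⟨r, hr⟩ : ∃ r : α → ℝ, ∀ a, ∑ b, m a b = r a := ⟨_, fun _ => rfl⟩
  obtain ⟨s, hs⟩ : ∃ s : β → ℝ, ∀ b, ∑ a, m a b = s b := ⟨_, fun _ => rfl⟩
  obtain ⟨M, hM⟩ : ∃ M, ∑ a, r a = M := ⟨_, rfl⟩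
  have hsM : ∑ b, s b = M := by simp_rw [← hs, ← hM, ← hr]; exact Finset.sum_comm
  simp only [massMutualInfo, hr, hs, hM, Finset.sum_add_distrib, Finset.sum_sub_distrib,
    mul_add, mul_sub]
  have hprod : ∑ a, ∑ b, r a * s b / M = M * M / M := by
    simp_rw [mul_div_assoc, ← Finset.mul_sum, ← Finset.sum_mul, ← Finset.sum_div, hsM, hM]
  have hlogr : ∑ a, ∑ b, m a b * log (r a) = ∑ a, r a * log (r a) := by
    simp_rw [← Finset.sum_mul, hr]
  have hlogs : ∑ a, ∑ b, m a b * log (s b) = ∑ b, s b * log (s b) := by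
    rw [Finset.sum_comm]; simp_rw [← Finset.sum_mul, hs]
  have hlogM : ∑ a, ∑ b, m a b * log M = M * log M := by
    simp_rw [← Finset.sum_mul, hr, hM]
  have hMM : M * M / M = M := by
    rcases eq_or_ne M 0 with h | h
    · simp [h]
    · field_simp
  rw [hprod, hlogr, hlogs, hlogM, hMM]
  simp only [negMulLog, neg_mul, Finset.sum_neg_distrib]
  ring

lemma massMutualInfo_nonneg (m : α → β → ℝ) (hm : ∀ a b, 0 ≤ m a b) :
    0 ≤ massMutualInfo m := by
  rw [massMutualInfo_eq_sum_klFun m hm]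
  exact Finset.sum_nonneg fun a _ => Finset.sum_nonneg fun b _ =>
    have h := le_marginals m hm a b
    div_mul_klFun_mul_div_nonneg (hm a b) h.1 h.2.1 h.2.2

lemma massMutualInfo_eq_zero_iff (m : α → β → ℝ) (hm : ∀ a b, 0 ≤ m a b) :
    massMutualInfo m = 0 ↔
      ∀ a b, m a b * ∑ a', ∑ b', m a' b' = (∑ b', m a b') * ∑ a', m a' b := by
  have h := le_marginals m hm
  rw [massMutualInfo_eq_sum_klFun m hm, Finset.sum_eq_zero_iff_of_nonneg fun a _ =>
    Finset.sum_nonneg fun b _ => div_mul_klFun_mul_div_nonneg (hm a b) (h a b).1 (h a b).2.1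
      (h a b).2.2]
  refine forall_congr' fun a => ?_
  rw [Finset.sum_eq_zero_iff_of_nonneg fun b _ =>
    div_mul_klFun_mul_div_nonneg (hm a b) (h a b).1 (h a b).2.1 (h a b).2.2]
  simp only [Finset.mem_univ, true_implies]
  exact forall_congr' fun b =>
    div_mul_klFun_mul_div_eq_zero_iff (hm a b) (h a b).1 (h a b).2.1 (h a b).2.2

end MassMutualInfo

section Entropy

variable {μ : Measure Ω} {α β γ : Type*}

lemma DiscreteRV.pair {X : Ω → α} {Y : Ω → β} (hX : DiscreteRV X) (hY : DiscreteRV Y) :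
    DiscreteRV (pair X Y) := fun q => by
  rw [← Set.singleton_prod_singleton]
  exact (hX q.1).inter (hY q.2)

lemma DiscreteRV.comp [Countable α] {X : Ω → α} (hX : DiscreteRV X) (k : α → β) :
    DiscreteRV (k ∘ X) := fun b => by
  rw [Set.preimage_comp, ← Set.biUnion_preimage_singleton]
  exact .biUnion (Set.to_countable _) fun a _ => hX a

lemma ent_eq_sum [Fintype α] (X : Ω → α) :
    ent μ X = ∑ a, negMulLog (μ.real (X ⁻¹' {a})) :=
  tsum_fintype _

lemma ent_congr_ae {X X' : Ω → α} (h : X =ᵐ[μ] X') : ent μ X = ent μ X' := by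
  simp only [ent, measure_congr (h.preimage _)]

lemma cmi_congr_ae {X X' : Ω → α} {Y Y' : Ω → β} {Z Z' : Ω → γ} (hX : X =ᵐ[μ] X')
    (hY : Y =ᵐ[μ] Y') (hZ : Z =ᵐ[μ] Z') : cmi μ X Y Z = cmi μ X' Y' Z' := by
  have hXZ : pair X Z =ᵐ[μ] pair X' Z' := hX.prodMk hZ
  have hYZ : pair Y Z =ᵐ[μ] pair Y' Z' := hY.prodMk hZ
  have hXYZ : pair (pair X Y) Z =ᵐ[μ] pair (pair X' Y') Z' := (hX.prodMk hY).prodMk hZ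
  rw [cmi, cmi, ent_congr_ae hXZ, ent_congr_ae hYZ, ent_congr_ae hXYZ, ent_congr_ae hZ]

lemma ent_comp_of_injective {k : α → β} (hk : Injective k) (X : Ω → α) :
    ent μ (k ∘ X) = ent μ X := by
  rw [ent, ent, ← hk.tsum_eq]
  · simp_rw [Set.preimage_comp, ← Set.image_singleton, hk.preimage_image]
  · rintro b hb
    by_contra hnot
    apply hb
    dsimp only
    rw [Set.preimage_comp, Set.preimage_singleton_eq_empty.2 hnot]
    simp

lemma cmi_comp_cond_eq_zero (e : α → γ) (X : Ω → α) (Y : Ω → β) :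
    cmi μ (e ∘ X) Y X = 0 := by
  have h₁ : ent μ (pair (e ∘ X) X) = ent μ X :=
    ent_comp_of_injective (k := fun a => (e a, a)) (fun _ _ h => congrArg Prod.snd h) X
  have h₂ : ent μ (pair (pair (e ∘ X) Y) X) = ent μ (pair Y X) :=
    ent_comp_of_injective (k := fun q : β × α => ((e q.2, q.1), q.2))
      (fun _ _ h => by simp only [Prod.mk.injEq] at h; exact Prod.ext h.1.2 h.2) (pair Y X)
  rw [cmi, h₁, h₂]
  ring

lemma measureReal_comp_preimage_singleton [IsFiniteMeasure μ] [Fintype α] {G : Ω → α}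
    (hG : DiscreteRV G) (k : α → β) (b : β) :
    μ.real ((k ∘ G) ⁻¹' {b}) = ∑ a, if k a = b then μ.real (G ⁻¹' {a}) else 0 := by
  rw [← Finset.sum_filter, sum_measureReal_preimage_singleton _ fun a _ => hG a]
  congr 1
  ext
  simp

lemma ae_of_measure_preimage_singleton_eq_zero [Countable α] {G : Ω → α} {p : α → Prop}
    (h : ∀ a, ¬ p a → μ (G ⁻¹' {a}) = 0) : ∀ᵐ ω ∂μ, p (G ω) := by
  rw [ae_iff]
  have hset : {ω | ¬ p (G ω)} = ⋃ a, ⋃ (_ : ¬ p a), G ⁻¹' {a} := by ext; simp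
  rw [hset]
  exact measure_iUnion_null fun a => measure_iUnion_null (h a)

lemma measureReal_preimage_eq_sum_pair [IsFiniteMeasure μ] [Fintype α] [Fintype γ] {X : Ω → α}
    {Z : Ω → γ} (hX : DiscreteRV X) (hZ : DiscreteRV Z) (c : γ) :
    μ.real (Z ⁻¹' {c}) = ∑ a, μ.real (pair X Z ⁻¹' {(a, c)}) := by
  conv_lhs => rw [show Z = Prod.snd ∘ pair X Z from rfl,
    measureReal_comp_preimage_singleton (hX.pair hZ)]
  simp [Fintype.sum_prod_type]

section Marginals

variable [IsFiniteMeasure μ] [Fintype α] [Fintype β] [Fintype γ] {X : Ω → α} {Y : Ω → β}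
  {Z : Ω → γ} (hX : DiscreteRV X) (hY : DiscreteRV Y) (hZ : DiscreteRV Z)
include hX hY hZ

lemma measureReal_preimage_pair_eq_sum_mid (a : α) (c : γ) :
    μ.real (pair X Z ⁻¹' {(a, c)}) = ∑ b, μ.real (pair (pair X Y) Z ⁻¹' {((a, b), c)}) := by
  rw [show pair X Z = (fun q : (α × β) × γ => (q.1.1, q.2)) ∘ pair (pair X Y) Z from rfl,
    measureReal_comp_preimage_singleton ((hX.pair hY).pair hZ)]
  simp only [Fintype.sum_prod_type, Prod.mk.injEq, ite_and]
  rw [Finset.sum_comm]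
  simp

lemma measureReal_preimage_pair_eq_sum_fst (b : β) (c : γ) :
    μ.real (pair Y Z ⁻¹' {(b, c)}) = ∑ a, μ.real (pair (pair X Y) Z ⁻¹' {((a, b), c)}) := by
  rw [show pair Y Z = (fun q : (α × β) × γ => (q.1.2, q.2)) ∘ pair (pair X Y) Z from rfl,
    measureReal_comp_preimage_singleton ((hX.pair hY).pair hZ)]
  simp only [Fintype.sum_prod_type, Prod.mk.injEq, ite_and]
  simp

lemma cmi_eq_sum_massMutualInfo :
    cmi μ X Y Z = ∑ c, massMutualInfo fun a b => μ.real (pair (pair X Y) Z ⁻¹' {((a, b), c)}) := by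
  have hXYZ : ent μ (pair (pair X Y) Z) =
      ∑ c, ∑ a, ∑ b, negMulLog (μ.real (pair (pair X Y) Z ⁻¹' {((a, b), c)})) := by
    rw [ent_eq_sum, Fintype.sum_prod_type_right]
    simp only [Fintype.sum_prod_type]
  simp only [massMutualInfo, Finset.sum_add_distrib, Finset.sum_sub_distrib,
    ← measureReal_preimage_pair_eq_sum_mid hX hY hZ,
    ← measureReal_preimage_pair_eq_sum_fst hX hY hZ, ← measureReal_preimage_eq_sum_pair hX hZ, cmi,
    hXYZ]
  simp only [ent_eq_sum, Fintype.sum_prod_type_right]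

theorem cmi_eq_zero_iff :
    cmi μ X Y Z = 0 ↔ ∀ a b c,
      μ.real (pair (pair X Y) Z ⁻¹' {((a, b), c)}) * μ.real (Z ⁻¹' {c}) =
        μ.real (pair X Z ⁻¹' {(a, c)}) * μ.real (pair Y Z ⁻¹' {(b, c)}) := by
  rw [cmi_eq_sum_massMutualInfo hX hY hZ, Finset.sum_eq_zero_iff_of_nonneg fun c _ =>
    massMutualInfo_nonneg _ fun _ _ => measureReal_nonneg]
  simp only [Finset.mem_univ, true_implies,
    massMutualInfo_eq_zero_iff _ fun _ _ => measureReal_nonneg,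
    ← measureReal_preimage_pair_eq_sum_mid hX hY hZ,
    ← measureReal_preimage_pair_eq_sum_fst hX hY hZ, ← measureReal_preimage_eq_sum_pair hX hZ]
  exact ⟨fun h a b c => h c a b, fun h c a b => h a b c⟩

end Marginals

lemma measureReal_preimage_le_comp [IsFiniteMeasure μ] (V : Ω → α) (k : α → β) (a : α) :
    μ.real (V ⁻¹' {a}) ≤ μ.real ((k ∘ V) ⁻¹' {k a}) :=
  measureReal_mono fun ω (hω : V ω = a) => show k (V ω) = k a from hω ▸ rfl

lemma measureReal_preimage_pair_eq_zero_of_ae {X : Ω → α} {Y : Ω → β} {c : α → γ} {d : β → γ}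
    (hcd : c ∘ X =ᵐ[μ] d ∘ Y) {a : α} {b : β} (hab : c a ≠ d b) :
    μ.real (pair X Y ⁻¹' {(a, b)}) = 0 := by
  rw [measureReal_def, measure_mono_null (fun ω hω => ?_) (ae_iff.1 hcd), ENNReal.toReal_zero]
  simp only [Set.mem_preimage, Set.mem_singleton_iff, pair, Prod.mk.injEq] at hω
  simpa [hω.1, hω.2] using hab

lemma eq_div_mul_of_mul_eq_mul {a b c e : ℝ} (ha : 0 ≤ a) (hab : a ≤ b) (hbe : b ≤ e)
    (h : a * e = b * c) : a = b / e * c := by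
  rcases (ha.trans (hab.trans hbe)).eq_or_lt with he | he
  · have hb : b = 0 := le_antisymm (he ▸ hbe) (ha.trans hab)
    simp [le_antisymm (hb ▸ hab) ha, hb]
  · rw [div_mul_eq_mul_div, eq_div_iff he.ne', h]

lemma measureReal_preimage_pair_comp (G : Ω → α) (k : α → γ) (a : α) (t : γ) :
    μ.real (pair G (k ∘ G) ⁻¹' {(a, t)}) = if k a = t then μ.real (G ⁻¹' {a}) else 0 := by
  split_ifs with h
  · congr 1
    ext ω
    simp only [Set.mem_preimage, Set.mem_singleton_iff, pair, Function.comp, Prod.mk.injEq]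
    exact ⟨And.left, fun hω => ⟨hω, hω ▸ h⟩⟩
  · convert measureReal_empty (μ := μ)
    ext ω
    simp only [Set.mem_preimage, Set.mem_singleton_iff, pair, Function.comp, Prod.mk.injEq,
      Set.mem_empty_iff_false, iff_false, not_and]
    exact fun hω => hω ▸ h

theorem cmi_comp_eq_zero_iff [IsFiniteMeasure μ] [Fintype α] [Fintype β] [Fintype γ]
    {X : Ω → α} {Y : Ω → β} (hX : DiscreteRV X) (hY : DiscreteRV Y) (c : α → γ) (d : β → γ)
    (hcd : c ∘ X =ᵐ[μ] d ∘ Y) :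
    cmi μ X Y (c ∘ X) = 0 ↔ ∀ a b, c a = d b →
      μ.real (pair X Y ⁻¹' {(a, b)}) * μ.real ((c ∘ X) ⁻¹' {c a}) =
        μ.real (X ⁻¹' {a}) * μ.real (Y ⁻¹' {b}) := by
  have hXY (a b t) : μ.real (pair (pair X Y) (c ∘ X) ⁻¹' {((a, b), t)}) =
      if c a = t then μ.real (pair X Y ⁻¹' {(a, b)}) else 0 :=
    measureReal_preimage_pair_comp (pair X Y) (c ∘ Prod.fst) (a, b) t
  have hXc (a t) : μ.real (pair X (c ∘ X) ⁻¹' {(a, t)}) =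
      if c a = t then μ.real (X ⁻¹' {a}) else 0 :=
    measureReal_preimage_pair_comp X c a t
  have hYc (b t) : μ.real (pair Y (c ∘ X) ⁻¹' {(b, t)}) =
      if d b = t then μ.real (Y ⁻¹' {b}) else 0 := by
    rw [← measureReal_preimage_pair_comp Y d b t]
    exact measureReal_congr (((Filter.EventuallyEq.refl _ Y).prodMk hcd).preimage _)
  rw [cmi_eq_zero_iff hX hY (hX.comp c)]
  simp only [hXY, hXc, hYc]
  constructor
  · intro h a b hab
    simpa [hab] using h a b (c a)
  · intro h a b t
    by_cases ha : c a = t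
    · by_cases hb : d b = t
      · simpa [ha, hb] using h a b (ha.trans hb.symm)
      · simp [ha, hb, measureReal_preimage_pair_eq_zero_of_ae hcd (ha.trans_ne (Ne.symm hb))]
    · simp [ha]

end Entropy

section BlockProduct

variable {μ : Measure Ω} {α β γ : Type*}

def IsBlockProduct {α β : Type*} (p : α × β → ℝ) : Prop :=
  ∃ (S : Type) (_ : Fintype S) (c : α → S) (d : β → S) (f : α → ℝ) (g : β → ℝ),
    ∀ a b, p (a, b) = if c a = d b then f a * g b else 0

namespace IsBlockProduct

variable {p : α × β → ℝ}

lemma reweight (h : IsBlockProduct p) (u : α → ℝ) (v : β → ℝ) :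
    IsBlockProduct fun q => u q.1 * v q.2 * p q := by
  obtain ⟨S, hS, c, d, f, g, hp⟩ := h
  refine ⟨S, hS, c, d, fun a => u a * f a, fun b => v b * g b, fun a b => ?_⟩
  dsimp only
  rw [hp]
  split_ifs <;> ring

lemma adjoin_common {Z : Type} [Fintype Z] (h : IsBlockProduct p) :
    IsBlockProduct fun q : (Z × α) × (Z × β) => if q.1.1 = q.2.1 then p (q.1.2, q.2.2) else 0 := by
  obtain ⟨S, hS, c, d, f, g, hp⟩ := h
  refine ⟨Z × S, inferInstance, fun x => (x.1, c x.2), fun y => (y.1, d y.2), fun x => f x.2,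
    fun y => g y.2, fun ⟨z, a⟩ ⟨z', b⟩ => ?_⟩
  simp only [hp, Prod.mk.injEq, ite_and]

end IsBlockProduct

lemma mul_sum_eq_sum_mul_sum_of_block {p : α × β → ℝ} [Fintype α] [Fintype β] {c : α → γ}
    {d : β → γ} {f : α → ℝ} {g : β → ℝ} (hp : ∀ a b, p (a, b) = if c a = d b then f a * g b else 0)
    {a : α} {b : β} (hab : c a = d b) :
    p (a, b) * ∑ q, (if c q.1 = c a then p q else 0) =
      (∑ q, if q.1 = a then p q else 0) * ∑ q, if q.2 = b then p q else 0 := by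
  set F := ∑ a', if c a' = c a then f a' else 0
  set G := ∑ b', if d b' = c a then g b' else 0
  have hblock : ∑ q, (if c q.1 = c a then p q else 0) = F * G := by
    simp only [Fintype.sum_prod_type, F, G, Finset.sum_mul_sum, hp]
    refine Finset.sum_congr rfl fun a' _ => Finset.sum_congr rfl fun b' _ => ?_
    split_ifs <;> simp_all
  have hrow : ∑ q, (if q.1 = a then p q else 0) = f a * G := by
    rw [Fintype.sum_prod_type, Finset.sum_eq_single a (fun a' _ h => by simp [h]) (by simp),
      Finset.mul_sum]
    refine Finset.sum_congr rfl fun b' _ => ?_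
    simp only [if_true, hp, mul_ite, mul_zero, eq_comm]
  have hcol : ∑ q, (if q.2 = b then p q else 0) = g b * F := by
    rw [Fintype.sum_prod_type_right, Finset.sum_eq_single b (fun b' _ h => by simp [h]) (by simp),
      Finset.mul_sum]
    refine Finset.sum_congr rfl fun a' _ => ?_
    simp only [if_true, hp, mul_ite, mul_zero, hab]
    split_ifs <;> ring
  rw [hblock, hrow, hcol, hp, if_pos hab]
  ring

theorem isTrivialPair_of_isBlockProduct [IsFiniteMeasure μ] [Fintype α] [Fintype β]
    {X : Ω → α} {Y : Ω → β} (hX : DiscreteRV X) (hY : DiscreteRV Y)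
    (h : IsBlockProduct fun q => μ.real (pair X Y ⁻¹' {q})) : IsTrivialPair μ X Y := by
  obtain ⟨S, hS, c, d, f, g, hp⟩ := h
  have hcd : c ∘ X =ᵐ[μ] d ∘ Y :=
    ae_of_measure_preimage_singleton_eq_zero (G := pair X Y) (p := fun q => c q.1 = d q.2)
      fun q hq => by
        rw [← measureReal_eq_zero_iff (by finiteness)]
        exact (hp q.1 q.2).trans (if_neg hq)
  refine ⟨S, hS, c ∘ X, hX.comp c, ?_, ?_, cmi_comp_cond_eq_zero c X Y⟩
  · refine (cmi_comp_eq_zero_iff hX hY c d hcd).2 fun a b hab => ?_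
    have hσ : μ.real ((c ∘ X) ⁻¹' {c a}) =
        ∑ q, if c q.1 = c a then μ.real (pair X Y ⁻¹' {q}) else 0 :=
      measureReal_comp_preimage_singleton (hX.pair hY) (c ∘ Prod.fst) (c a)
    have hΦ : μ.real (X ⁻¹' {a}) = ∑ q, if q.1 = a then μ.real (pair X Y ⁻¹' {q}) else 0 :=
      measureReal_comp_preimage_singleton (hX.pair hY) Prod.fst a
    have hΨ : μ.real (Y ⁻¹' {b}) = ∑ q, if q.2 = b then μ.real (pair X Y ⁻¹' {q}) else 0 :=
      measureReal_comp_preimage_singleton (hX.pair hY) Prod.snd b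
    rw [hσ, hΦ, hΨ]
    exact mul_sum_eq_sum_mul_sum_of_block (p := fun q => μ.real (pair X Y ⁻¹' {q})) hp hab
  · rw [cmi_congr_ae hcd .rfl .rfl]
    exact cmi_comp_cond_eq_zero d Y X

theorem exists_ae_eq_comp_of_cmi_eq_zero [Countable Ω] [DiscreteMeasurableSpace Ω] [Nonempty Ω]
    [IsFiniteMeasure μ] [Fintype α] [Fintype β] [Fintype γ] {X : Ω → α} {Y : Ω → β}
    {T : Ω → γ} (hXY : Injective (pair X Y)) (h : cmi μ T Y X = 0) :
    ∃ c : α → γ, T =ᵐ[μ] c ∘ X := by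
  have hfac := (cmi_eq_zero_iff (fun _ => .of_discrete) (fun _ => .of_discrete)
    (fun _ => .of_discrete)).1 h
  have hpos {ω : Ω} (hω : μ {ω} ≠ 0) : 0 < μ.real {ω} :=
    ENNReal.toReal_pos hω (measure_ne_top μ _)
  have hfactor : FactorsThrough (fun ω : {ω // μ {ω} ≠ 0} => T ω) (fun ω => X ω) := by
    rintro ⟨ω, hω⟩ ⟨ω', hω'⟩ (hX : X ω = X ω')
    by_contra hT
    -- `(X, Y)` determines the point, so this fibre can only contain `ω`, where `T ≠ T ω'`.
    have hempty : pair (pair T Y) X ⁻¹' {((T ω', Y ω), X ω)} = ∅ := by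
      refine Set.eq_empty_of_forall_notMem fun ω'' hω'' => hT ?_
      simp only [Set.mem_preimage, Set.mem_singleton_iff, pair, Prod.mk.injEq] at hω''
      exact hXY (Prod.ext hω''.2 hω''.1.2 : pair X Y ω'' = pair X Y ω) ▸ hω''.1.1
    have h₁ : μ.real {ω'} ≤ μ.real (pair T X ⁻¹' {(T ω', X ω)}) :=
      measureReal_mono (by simp [pair, hX])
    have h₂ : μ.real {ω} ≤ μ.real (pair Y X ⁻¹' {(Y ω, X ω)}) :=
      measureReal_mono (by simp [pair])
    have := hfac (T ω') (Y ω) (X ω)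
    rw [hempty, measureReal_empty, zero_mul] at this
    nlinarith [hpos hω, hpos hω']
  refine ⟨extend (fun ω : {ω // μ {ω} ≠ 0} => X ω) (fun ω => T ω)
    (fun _ => T (Classical.arbitrary Ω)), ae_iff_of_countable.2 fun ω hω => ?_⟩
  exact (hfactor.extend_apply _ ⟨ω, hω⟩).symm

theorem isBlockProduct_of_isTrivialPair [Fintype α] [Fintype β] [Nonempty α] [Nonempty β]
    [MeasurableSpace (α × β)] [DiscreteMeasurableSpace (α × β)] {ν : Measure (α × β)}
    [IsFiniteMeasure ν] (h : IsTrivialPair ν Prod.fst Prod.snd) :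
    IsBlockProduct fun q => ν.real {q} := by
  obtain ⟨S, hS, τ, -, h₁, h₂, h₃⟩ := h
  obtain ⟨c, hc⟩ := exists_ae_eq_comp_of_cmi_eq_zero (X := Prod.fst) (Y := Prod.snd)
    (fun _ _ h => h) h₃
  obtain ⟨d, hd⟩ := exists_ae_eq_comp_of_cmi_eq_zero (X := Prod.snd) (Y := Prod.fst)
    (fun _ _ h => Prod.ext (congrArg Prod.snd h) (congrArg Prod.fst h)) h₂
  have hcd : c ∘ Prod.fst =ᵐ[ν] d ∘ Prod.snd := hc.symm.trans hd
  rw [cmi_congr_ae .rfl .rfl hc] at h₁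
  have hblock := (cmi_comp_eq_zero_iff (fun _ => .of_discrete) (fun _ => .of_discrete) c d hcd).1 h₁
  refine ⟨S, hS, c, d, fun a => ν.real (Prod.fst ⁻¹' {a}) / ν.real ((c ∘ Prod.fst) ⁻¹' {c a}),
    fun b => ν.real (Prod.snd ⁻¹' {b}), fun a b => ?_⟩
  split_ifs with hab
  · exact eq_div_mul_of_mul_eq_mul measureReal_nonneg
      (measureReal_preimage_le_comp id Prod.fst (a, b))
      (measureReal_preimage_le_comp Prod.fst c a) (hblock a b hab)
  · exact measureReal_preimage_pair_eq_zero_of_ae hcd hab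

end BlockProduct

section Primitive

variable {𝒜 ℬ 𝒰 𝒱 : Type} [Fintype 𝒜] [Fintype ℬ] [Fintype 𝒰] [Fintype 𝒱]

lemma PMF.sum_coe_eq_one {δ : Type*} [Fintype δ] (p : PMF δ) : ∑ x, p x = 1 := by
  rw [← tsum_fintype (L := .unconditional _), p.tsum_coe]

/-- The joint law of `((A,U),(B,V))` when independent uniform inputs `(A,B)` are fed to `κ`. -/
noncomputable def uniformInputs [Nonempty 𝒜] [Nonempty ℬ] (κ : 𝒜 × ℬ → PMF (𝒰 × 𝒱)) :
    PMF ((𝒜 × 𝒰) × (ℬ × 𝒱)) :=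
  PMF.ofFintype (fun q => ((Nat.card 𝒜 : ℝ≥0∞) * Nat.card ℬ)⁻¹ * κ (q.1.1, q.2.1) (q.1.2, q.2.2))
    (by
      rw [← (Equiv.prodProdProdComm 𝒜 ℬ 𝒰 𝒱).sum_comp, Fintype.sum_prod_type]
      simp [← Finset.mul_sum, PMF.sum_coe_eq_one]
      exact ENNReal.mul_inv_cancel (by simp) (by finiteness))

theorem FailsCompleteness.isBlockProduct [Nonempty 𝒜] [Nonempty ℬ] [Nonempty 𝒰] [Nonempty 𝒱]
    {κ : 𝒜 × ℬ → PMF (𝒰 × 𝒱)} (hκ : FailsCompleteness κ) :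
    IsBlockProduct fun q : (𝒜 × 𝒰) × (ℬ × 𝒱) => (κ (q.1.1, q.2.1) (q.1.2, q.2.2)).toReal := by
  let _ : MeasurableSpace ((𝒜 × 𝒰) × (ℬ × 𝒱)) := ⊤
  have : DiscreteMeasurableSpace ((𝒜 × 𝒰) × (ℬ × 𝒱)) := ⟨fun _ => trivial⟩
  set m : ℝ≥0∞ := ((Nat.card 𝒜 : ℝ≥0∞) * Nat.card ℬ)⁻¹
  set ν := (uniformInputs κ).toMeasure
  have hν (q : (𝒜 × 𝒰) × (ℬ × 𝒱)) : ν {q} = m * κ (q.1.1, q.2.1) (q.1.2, q.2.2) :=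
    (uniformInputs κ).toMeasure_apply_singleton q .of_discrete
  have hinputs (a : 𝒜) (b : ℬ) : ν {ω | ω.1.1 = a ∧ ω.2.1 = b} = m := by
    rw [PMF.toMeasure_apply_fintype, ← (Equiv.prodProdProdComm 𝒜 ℬ 𝒰 𝒱).sum_comp,
      Fintype.sum_prod_type]
    simp only [Set.indicator, Set.mem_ofPred_eq, Equiv.prodProdProdComm_apply, uniformInputs,
      PMF.ofFintype_apply]
    rw [Finset.sum_eq_single (a, b) (fun x _ hx => ?_) (by simp)]
    · simp [← Finset.mul_sum, PMF.sum_coe_eq_one, m]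
    · refine Finset.sum_eq_zero fun _ _ => if_neg fun h => hx (Prod.ext h.1 h.2)
  have hgen : GeneratedBy ν κ (·.1.1) (·.2.1) (·.1.2) (·.2.2) (fun _ => ()) := by
    intro t a b u v
    have hpoint : {ω : (𝒜 × 𝒰) × (ℬ × 𝒱) | ω.1.1 = a ∧ ω.2.1 = b ∧ ω.1.2 = u ∧ ω.2.2 = v}
        = {((a, u), (b, v))} := by
      ext ⟨⟨a', u'⟩, b', v'⟩
      simp only [Set.mem_ofPred_eq, Set.mem_singleton_iff, Prod.mk.injEq]
      tauto
    simp only [true_and]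
    rw [hpoint, hν, hinputs, mul_comm]
  have htriv := hκ _ ⊤ ν inferInstance _ _ _ _ (fun _ => trivial) (fun _ => trivial)
    (fun _ => trivial) (fun _ => trivial) hinputs hgen
  convert (isBlockProduct_of_isTrivialPair htriv).reweight (fun _ => m⁻¹.toReal) (fun _ => 1)
    using 2 with q
  have hm : m.toReal ≠ 0 := ENNReal.toReal_ne_zero.2 ⟨by simp [m, ENNReal.mul_eq_top], by simp [m]⟩
  rw [measureReal_def, hν, ENNReal.toReal_mul, ENNReal.toReal_inv]
  field_simp

end Primitive

lemma GeneratedBy.measureReal_preimage_pair {μ : Measure Ω} {𝒜 ℬ 𝒰 𝒱 𝒵 : Type*}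
    {κ : 𝒜 × ℬ → PMF (𝒰 × 𝒱)} {A : Ω → 𝒜} {B : Ω → ℬ} {U : Ω → 𝒰} {V : Ω → 𝒱} {Z : Ω → 𝒵}
    (hgen : GeneratedBy μ κ A B U V Z) (z : 𝒵) (a : 𝒜) (u : 𝒰) (z' : 𝒵) (b : ℬ) (v : 𝒱) :
    μ.real (pair (pair Z (pair A U)) (pair Z (pair B V)) ⁻¹' {((z, a, u), (z', b, v))}) =
      if z = z' then μ.real (pair (pair A B) Z ⁻¹' {((a, b), z)}) * (κ (a, b) (u, v)).toReal
      else 0 := by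
  split_ifs with hz
  · subst hz
    have h₁ : pair (pair Z (pair A U)) (pair Z (pair B V)) ⁻¹' {((z, a, u), (z, b, v))} =
        {ω | Z ω = z ∧ A ω = a ∧ B ω = b ∧ U ω = u ∧ V ω = v} := by
      ext
      simp only [Set.mem_preimage, Set.mem_singleton_iff, pair, Prod.mk.injEq, Set.mem_ofPred_eq]
      tauto
    have h₂ : pair (pair A B) Z ⁻¹' {((a, b), z)} = {ω | Z ω = z ∧ A ω = a ∧ B ω = b} := by
      ext
      simp only [Set.mem_preimage, Set.mem_singleton_iff, pair, Prod.mk.injEq, Set.mem_ofPred_eq]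
      tauto
    rw [h₁, h₂, measureReal_def, hgen, ENNReal.toReal_mul, measureReal_def]
  · convert measureReal_empty (μ := μ)
    ext
    simp only [Set.mem_preimage, Set.mem_singleton_iff, pair, Prod.mk.injEq,
      Set.mem_empty_iff_false, iff_false, not_and]
    rintro ⟨rfl, -⟩ rfl
    exact absurd rfl hz

theorem stmt8_general {Ω : Type*} [MeasurableSpace Ω] (μ : Measure Ω) [IsProbabilityMeasure μ]
    {𝒜 ℬ 𝒰 𝒱 𝒵 : Type} [Fintype 𝒜] [Fintype ℬ] [Fintype 𝒰] [Fintype 𝒱] [Fintype 𝒵]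
    [Nonempty 𝒜] [Nonempty ℬ] [Nonempty 𝒰] [Nonempty 𝒱]
    (κ : 𝒜 × ℬ → PMF (𝒰 × 𝒱)) (hκ : FailsCompleteness κ)
    (A : Ω → 𝒜) (B : Ω → ℬ) (U : Ω → 𝒰) (V : Ω → 𝒱) (Z : Ω → 𝒵)
    (hA : DiscreteRV A) (hB : DiscreteRV B) (hU : DiscreteRV U) (hV : DiscreteRV V)
    (hZ : DiscreteRV Z)
    (hMarkov : cmi μ A B Z = 0) (hgen : GeneratedBy μ κ A B U V Z) :
    IsTrivialPair μ (pair Z (pair A U)) (pair Z (pair B V)) := by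
  have hfac := (cmi_eq_zero_iff hA hB hZ).1 hMarkov
  refine isTrivialPair_of_isBlockProduct (hZ.pair (hA.pair hU)) (hZ.pair (hB.pair hV)) ?_
  convert (hκ.isBlockProduct.adjoin_common (Z := 𝒵)).reweight
    (fun x => μ.real (pair A Z ⁻¹' {(x.2.1, x.1)}) / μ.real (Z ⁻¹' {x.1}))
    (fun y => μ.real (pair B Z ⁻¹' {(y.2.1, y.1)})) using 1
  funext ⟨⟨z, a, u⟩, z', b, v⟩
  rw [hgen.measureReal_preimage_pair]
  split_ifs with hz
  · subst hz
    have h₁ : μ.real (pair (pair A B) Z ⁻¹' {((a, b), z)}) ≤ μ.real (pair A Z ⁻¹' {(a, z)}) :=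
      measureReal_preimage_le_comp _ (fun q => (q.1.1, q.2)) ((a, b), z)
    have h₂ : μ.real (pair A Z ⁻¹' {(a, z)}) ≤ μ.real (Z ⁻¹' {z}) :=
      measureReal_preimage_le_comp _ Prod.snd (a, z)
    rw [eq_div_mul_of_mul_eq_mul measureReal_nonneg h₁ h₂ (hfac a b z)]
  · simp

/-- If a primitive `κ` fails the completeness condition, `I[A;B|Z] = 0` and `(U,V)` is
generated by one use of `κ` with inputs `(A,B)` and side information `Z`, then the pair
`(⟨Z,A,U⟩, ⟨Z,B,V⟩)` is trivial. -/
theorem stmt8 {Ω : Type*} [MeasurableSpace Ω] (μ : Measure Ω) [IsProbabilityMeasure μ]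
    {𝒜 ℬ 𝒰 𝒱 𝒵 : Type} [Fintype 𝒜] [Fintype ℬ] [Fintype 𝒰] [Fintype 𝒱] [Fintype 𝒵]
    [Nonempty 𝒜] [Nonempty ℬ] [Nonempty 𝒰] [Nonempty 𝒱] [Nonempty 𝒵]
    (κ : 𝒜 × ℬ → PMF (𝒰 × 𝒱)) (hκ : FailsCompleteness κ)
    (A : Ω → 𝒜) (B : Ω → ℬ) (U : Ω → 𝒰) (V : Ω → 𝒱) (Z : Ω → 𝒵)
    (hA : DiscreteRV A) (hB : DiscreteRV B) (hU : DiscreteRV U) (hV : DiscreteRV V)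
    (hZ : DiscreteRV Z)
    (hMarkov : cmi μ A B Z = 0) (hgen : GeneratedBy μ κ A B U V Z) :
    IsTrivialPair μ (pair Z (pair A U)) (pair Z (pair B V)) :=
  stmt8_general μ κ hκ A B U V Z hA hB hU hV hZ hMarkov hgen

end SecureComputation
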